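/- arXiv:2305.05550 — 2 statements merged into one kernel-verified Lean document; each statement's English description precedes it below -/
import Mathlib

section
/- With notation as follows, fix integers a, b, ℓ with 1 ≤ a ≤ b ≤ n, a + b ≤ n, ℓ ≠ 0, and 1 ≤ a+ℓ ≤ b−ℓ ≤ n. Define ψ(B,C) := Σ_{i=1}^{n−1}(BC)_{i,i+1}, let B_{pq} := E_{pq}+E_{qp} for p < q and B_{pp} := E_{pp}, and let C_{pq} := E_{pq} − E_{qp} if 1 ≤ p < q ≤ n and C_{pq} := 0 otherwise. Then Σ_{k=0}^{n} ψ(B_{a+ℓ, b−ℓ}, C_{a−k, b+k+1}) = 0. -/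
open Finset Matrix

/-- The elementary matrix `E_{pq}` in 1-based indexing, defined to be `0`
unless `1 ≤ p, q ≤ n`. -/
noncomputable def Eint (n : ℕ) (p q : ℤ) : Matrix (Fin n) (Fin n) ℂ :=
  if h : 1 ≤ p ∧ p ≤ (n : ℤ) ∧ 1 ≤ q ∧ q ≤ (n : ℤ) then
    Matrix.single ⟨(p - 1).toNat, by omega⟩ ⟨(q - 1).toNat, by omega⟩ 1
  else 0

/-- `B_{pq} = E_{pq} + E_{qp}` for `p < q`, `B_{pp} = E_{pp}`, and `0` otherwise. -/
noncomputable def Bmat (n : ℕ) (p q : ℤ) : Matrix (Fin n) (Fin n) ℂ :=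
  if p < q then Eint n p q + Eint n q p else if p = q then Eint n p p else 0

/-- `C_{pq} = E_{pq} - E_{qp}` if `1 ≤ p < q ≤ n`, and `0` otherwise. -/
noncomputable def Cmat (n : ℕ) (p q : ℤ) : Matrix (Fin n) (Fin n) ℂ :=
  if p < q then Eint n p q - Eint n q p else 0

/-- `ψ(B, C) = Σ_{i=1}^{n-1} (BC)_{i,i+1}`, the sum of the superdiagonal
entries of `B * C`. -/
noncomputable def psi (n : ℕ) (B C : Matrix (Fin n) (Fin n) ℂ) : ℂ :=
  ∑ i : Fin n, if h : (i : ℕ) + 1 < n then (B * C) i ⟨(i : ℕ) + 1, h⟩ else 0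


/-!
Expanding `B` and `C` into matrix units, `ψ(E_{pq}, E_{uv})` is `1` when `q = u` and
`v = p + 1` (all indices in range) and `0` otherwise. Of the four products in
`ψ(B_{a+ℓ,b-ℓ}, C_{a-k,b+k+1})` the conditions `a ≤ b` and `a + ℓ ≤ b - ℓ` leave only
`E_{b-ℓ,a+ℓ} E_{a+ℓ,b-ℓ+1}`, contributing `+1` at `k = -ℓ`, and `-E_{a+ℓ,b-ℓ} E_{b-ℓ,a+ℓ+1}`,
contributing `-1` at `k = -ℓ - 1` (here `a + b ≤ n` keeps the indices in range). So the summand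
is `δ_{k,-ℓ} - δ_{k+1,-ℓ}` and the sum telescopes to `δ_{0,-ℓ} - δ_{n+1,-ℓ} = 0`.
-/

theorem Eint_apply (n : ℕ) (p q : ℤ) (i j : Fin n) :
    Eint n p q i j = if (i : ℤ) + 1 = p ∧ (j : ℤ) + 1 = q then 1 else 0 := by
  by_cases hpq : 1 ≤ p ∧ p ≤ (n : ℤ) ∧ 1 ≤ q ∧ q ≤ (n : ℤ)
  · rw [Eint, dif_pos hpq, single_apply]
    exact if_congr (by simp only [Fin.ext_iff]; omega) rfl rfl
  · rw [Eint, dif_neg hpq, Matrix.zero_apply, if_neg (by omega)]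

theorem sum_fin_ite_val_add_one_eq {α : Type*} [AddCommMonoid α] (n : ℕ) (q : ℤ) (c : α) :
    ∑ k : Fin n, (if (k : ℤ) + 1 = q then c else 0) = if 1 ≤ q ∧ q ≤ n then c else 0 := by
  split_ifs with hq
  · rw [Fintype.sum_eq_single ⟨(q - 1).toNat, by omega⟩
      fun k hk => if_neg fun hkq => hk (Fin.ext (by dsimp only; omega))]
    exact if_pos (by dsimp only; omega)
  · exact Finset.sum_eq_zero fun k _ => if_neg (by omega)

theorem Eint_mul_Eint (n : ℕ) (p q u v : ℤ) :
    Eint n p q * Eint n u v = if q = u ∧ 1 ≤ q ∧ q ≤ n then Eint n p v else 0 := by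
  ext i j
  have summand : ∀ k : Fin n,
      Eint n p q i k * Eint n u v k j =
        if (k : ℤ) + 1 = q then (if (i : ℤ) + 1 = p ∧ q = u ∧ (j : ℤ) + 1 = v then 1 else 0)
        else 0 := fun k => by
    simp only [Eint_apply]
    split_ifs <;> first | omega | simp
  rw [mul_apply, Finset.sum_congr rfl fun k _ => summand k, sum_fin_ite_val_add_one_eq,
    apply_ite (fun M : Matrix (Fin n) (Fin n) ℂ => M i j), Eint_apply, Matrix.zero_apply]
  split_ifs <;> first | rfl | omega

section SuperdiagSum

variable {α : Type*} {n : ℕ}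

def superdiagSum [AddCommMonoid α] (A : Matrix (Fin n) (Fin n) α) : α :=
  ∑ i : Fin n, if h : (i : ℕ) + 1 < n then A i ⟨(i : ℕ) + 1, h⟩ else 0

theorem superdiagSum_add [AddCommMonoid α] (A B : Matrix (Fin n) (Fin n) α) :
    superdiagSum (A + B) = superdiagSum A + superdiagSum B := by
  rw [superdiagSum, superdiagSum, superdiagSum, ← Finset.sum_add_distrib]
  refine Finset.sum_congr rfl fun i _ => ?_
  split_ifs <;> simp

theorem superdiagSum_sub [AddCommGroup α] (A B : Matrix (Fin n) (Fin n) α) :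
    superdiagSum (A - B) = superdiagSum A - superdiagSum B := by
  rw [superdiagSum, superdiagSum, superdiagSum, ← Finset.sum_sub_distrib]
  refine Finset.sum_congr rfl fun i _ => ?_
  split_ifs <;> simp

theorem superdiagSum_zero [AddCommMonoid α] : superdiagSum (0 : Matrix (Fin n) (Fin n) α) = 0 := by
  simp [superdiagSum]

end SuperdiagSum

theorem superdiagSum_Eint (n : ℕ) (p q : ℤ) :
    superdiagSum (Eint n p q) = if 1 ≤ p ∧ q = p + 1 ∧ q ≤ n then 1 else 0 := by
  have summand : ∀ i : Fin n,
      (if h : (i : ℕ) + 1 < n then Eint n p q i ⟨(i : ℕ) + 1, h⟩ else 0) =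
        if (i : ℤ) + 1 = p then (if q = p + 1 ∧ q ≤ n then 1 else 0) else 0 := fun i => by
    simp only [Eint_apply]
    split_ifs <;> first | rfl | omega
  rw [superdiagSum, Finset.sum_congr rfl fun i _ => summand i, sum_fin_ite_val_add_one_eq]
  split_ifs <;> first | omega | rfl

theorem psi_eq_superdiagSum (n : ℕ) (B C : Matrix (Fin n) (Fin n) ℂ) :
    psi n B C = superdiagSum (B * C) := rfl

theorem psi_add_left (n : ℕ) (B₁ B₂ C : Matrix (Fin n) (Fin n) ℂ) :
    psi n (B₁ + B₂) C = psi n B₁ C + psi n B₂ C := by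
  simp only [psi_eq_superdiagSum, add_mul, superdiagSum_add]

theorem psi_sub_right (n : ℕ) (B C₁ C₂ : Matrix (Fin n) (Fin n) ℂ) :
    psi n B (C₁ - C₂) = psi n B C₁ - psi n B C₂ := by
  simp only [psi_eq_superdiagSum, mul_sub, superdiagSum_sub]

theorem psi_Eint_Eint (n : ℕ) (p q u v : ℤ) :
    psi n (Eint n p q) (Eint n u v) =
      if q = u ∧ 1 ≤ q ∧ q ≤ n ∧ 1 ≤ p ∧ v = p + 1 ∧ v ≤ n then 1 else 0 := by
  rw [psi_eq_superdiagSum, Eint_mul_Eint, apply_ite superdiagSum, superdiagSum_Eint,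
    superdiagSum_zero]
  split_ifs <;> first | rfl | omega

theorem Bmat_of_lt {n : ℕ} {p q : ℤ} (h : p < q) : Bmat n p q = Eint n p q + Eint n q p :=
  if_pos h

theorem Bmat_self (n : ℕ) (p : ℤ) : Bmat n p p = Eint n p p := by
  simp [Bmat]

theorem Cmat_of_lt {n : ℕ} {p q : ℤ} (h : p < q) : Cmat n p q = Eint n p q - Eint n q p :=
  if_pos h

theorem psi_Bmat_Cmat (n : ℕ) (a b ℓ : ℤ) (k : ℕ) (hab : a ≤ b) (habn : a + b ≤ n)
    (hp : 1 ≤ a + ℓ) (hpq : a + ℓ ≤ b - ℓ) :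
    psi n (Bmat n (a + ℓ) (b - ℓ)) (Cmat n (a - k) (b + k + 1)) =
      (if (k : ℤ) = -ℓ then 1 else 0) - (if ((k + 1 : ℕ) : ℤ) = -ℓ then 1 else 0) := by
  rw [Cmat_of_lt (by omega)]
  rcases hpq.lt_or_eq with hpq | hpq
  · rw [Bmat_of_lt hpq]
    simp only [psi_add_left, psi_sub_right, psi_Eint_Eint]
    split_ifs <;> first | (exfalso; omega) | norm_num
  · rw [hpq, Bmat_self]
    simp only [psi_sub_right, psi_Eint_Eint]
    split_ifs <;> first | (exfalso; omega) | norm_num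

theorem zeta_s_sbar_offdiag_general (n a b : ℕ) (ℓ : ℤ)
    (h2 : a ≤ b) (h4 : a + b ≤ n)
    (hℓ : ℓ ≠ 0) (h5 : 1 ≤ (a : ℤ) + ℓ) (h6 : (a : ℤ) + ℓ ≤ (b : ℤ) - ℓ) :
    ∑ k ∈ Finset.range (n + 1),
      psi n (Bmat n ((a : ℤ) + ℓ) ((b : ℤ) - ℓ))
        (Cmat n ((a : ℤ) - k) ((b : ℤ) + k + 1)) = 0 := by
  rw [Finset.sum_congr rfl fun k _ => psi_Bmat_Cmat n a b ℓ k (by omega) (by omega) h5 h6,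
    Finset.sum_range_sub' (fun k : ℕ => if (k : ℤ) = -ℓ then (1 : ℂ) else 0),
    if_neg (by omega), if_neg (by omega), sub_zero]

/-- `Σ_{k=0}^{n} ψ(B_{a+ℓ, b-ℓ}, C_{a-k, b+k+1}) = 0` for `ℓ ≠ 0`
(equation (5.6)). -/
theorem zeta_s_sbar_offdiag (n a b : ℕ) (ℓ : ℤ)
    (h1 : 1 ≤ a) (h2 : a ≤ b) (h3 : b ≤ n) (h4 : a + b ≤ n)
    (hℓ : ℓ ≠ 0) (h5 : 1 ≤ (a : ℤ) + ℓ) (h6 : (a : ℤ) + ℓ ≤ (b : ℤ) - ℓ)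
    (h7 : (b : ℤ) - ℓ ≤ (n : ℤ)) :
    ∑ k ∈ Finset.range (n + 1),
      psi n (Bmat n ((a : ℤ) + ℓ) ((b : ℤ) - ℓ))
        (Cmat n ((a : ℤ) - k) ((b : ℤ) + k + 1)) = 0 :=
  zeta_s_sbar_offdiag_general n a b ℓ h2 h4 hℓ h5 h6
end

section
/- Let A be an associative unital ℂ-algebra with elements e, f, h satisfying he − eh = 2e and ef − fe = h, and let M be an A-module. Let λ ∈ ℂ with λ ∉ {0, −1, −2, …} (i.e., λ is not a nonpositive integer), and let v ∈ M satisfy f·v = 0 and h·v = λ·v. Define a₀ := 1 and a_{k+1} := −a_k / ((k+1)(k+λ)) for k ≥ 0. Then for every integer N ≥ 1: f · (Σ_{k=0}^{N} a_k e^k·v) = Σ_{k=0}^{N−1} a_k e^k·v. -/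
open Finset

/-- Truncated Whittaker-vector identity for `osp(1|2)`: if `f v = 0`,
`h v = λ v`, and `a₀ = 1`, `a_{k+1} = -a_k / ((k+1)(k+λ))` with `λ` not a
nonpositive integer, then `f · Σ_{k=0}^{N} a_k e^k v = Σ_{k=0}^{N-1} a_k e^k v`. -/
theorem whittaker_vector_truncated (A : Type*) [Ring A] [Algebra ℂ A]
    (M : Type*) [AddCommGroup M] [Module A M]
    (e f h : A)
    (he : h * e - e * h = 2 * e) (hef : e * f - f * e = h)
    (lam : ℂ) (hlam : ∀ m : ℕ, lam ≠ -(m : ℂ))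
    (v : M) (hfv : f • v = 0) (hhv : h • v = (algebraMap ℂ A lam) • v)
    (a : ℕ → ℂ) (ha0 : a 0 = 1)
    (harec : ∀ k : ℕ, a (k + 1) = -a k / (((k : ℂ) + 1) * ((k : ℂ) + lam))) :
    ∀ N : ℕ, 1 ≤ N →
      f • (∑ k ∈ Finset.range (N + 1), (algebraMap ℂ A (a k) * e ^ k) • v) =
        ∑ k ∈ Finset.range N, (algebraMap ℂ A (a k) * e ^ k) • v := by
  -- h acting on e^k v
  have hh : ∀ k : ℕ, (h * e ^ k) • v = (algebraMap ℂ A (lam + 2 * k) * e ^ k) • v := by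
    intro k
    induction k with
    | zero => simpa using hhv
    | succ k ih =>
      have h1 : h * e = 2 * e + e * h := by
        rw [← he]; noncomm_ring
      have step : h * e ^ (k + 1) = e * (h * e ^ k) + 2 * e ^ (k + 1) := by
        calc h * e ^ (k + 1) = (h * e) * e ^ k := by rw [pow_succ', ← mul_assoc]
          _ = (2 * e + e * h) * e ^ k := by rw [h1]
          _ = e * (h * e ^ k) + 2 * e ^ (k + 1) := by
              rw [add_mul, mul_assoc, mul_assoc, ← pow_succ', add_comm]
      have h2 : (2 : A) = algebraMap ℂ A 2 := by
        rw [map_ofNat]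
      have hs : lam + 2 * (((k + 1 : ℕ)) : ℂ) = (lam + 2 * (k : ℂ)) + 2 := by
        push_cast; ring
      have key : ∀ c : ℂ, e * (algebraMap ℂ A c * e ^ k) = algebraMap ℂ A c * e ^ (k + 1) := by
        intro c
        rw [← mul_assoc, ← Algebra.commutes, mul_assoc, ← pow_succ']
      rw [step, add_smul, mul_smul, ih, ← mul_smul, h2, ← add_smul, key, ← add_mul,
        ← map_add, hs]
  -- f acting on e^(k+1) v
  have hf : ∀ k : ℕ, (f * e ^ (k + 1)) • v
      = (algebraMap ℂ A (-((k : ℂ) + 1) * (lam + k)) * e ^ k) • v := by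
    intro k
    induction k with
    | zero =>
      have h1 : f * e ^ (0 + 1) = e * f - h := by
        rw [← hef]; noncomm_ring
      rw [h1, sub_smul, mul_smul, hfv, smul_zero, hhv, zero_sub]
      rw [show (-(((0 : ℕ) : ℂ) + 1) * (lam + ((0 : ℕ) : ℂ))) = -lam by push_cast; ring]
      rw [pow_zero, mul_one, map_neg, neg_smul]
    | succ k ih =>
      have h1 : f * e = e * f - h := by rw [← hef]; noncomm_ring
      have step : f * e ^ (k + 2) = e * (f * e ^ (k + 1)) - h * e ^ (k + 1) := by
        calc f * e ^ (k + 2) = (f * e) * e ^ (k + 1) := by rw [pow_succ', ← mul_assoc]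
          _ = (e * f - h) * e ^ (k + 1) := by rw [h1]
          _ = e * (f * e ^ (k + 1)) - h * e ^ (k + 1) := by rw [sub_mul, mul_assoc]
      have hs : -((((k + 1 : ℕ)) : ℂ) + 1) * (lam + ((k + 1 : ℕ) : ℂ))
          = (-((k : ℂ) + 1) * (lam + (k : ℂ))) - (lam + 2 * (((k + 1 : ℕ)) : ℂ)) := by
        push_cast; ring
      have key : ∀ c : ℂ, e * (algebraMap ℂ A c * e ^ k) = algebraMap ℂ A c * e ^ (k + 1) := by
        intro c
        rw [← mul_assoc, ← Algebra.commutes, mul_assoc, ← pow_succ']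
      rw [step, sub_smul, mul_smul, ih, ← mul_smul, hh (k + 1), ← sub_smul, key, ← sub_mul,
        ← map_sub, hs]
  intro N hN
  rw [Finset.smul_sum, Finset.sum_range_succ']
  have hzero : f • ((algebraMap ℂ A (a 0) * e ^ 0) • v) = 0 := by
    rw [ha0]
    simp [mul_smul, hfv]
  rw [hzero, add_zero]
  apply Finset.sum_congr rfl
  intro k hk
  have hk1 : ((k : ℂ) + 1) ≠ 0 := Nat.cast_add_one_ne_zero k
  have hk2 : ((k : ℂ) + lam) ≠ 0 := by
    intro hco
    exact hlam k (by linear_combination hco)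
  have hcoef : a (k + 1) * (-((k : ℂ) + 1) * (lam + k)) = a k := by
    rw [harec k]
    field_simp
    ring
  rw [← mul_smul, ← mul_assoc, ← Algebra.commutes, mul_assoc, mul_smul, hf k,
    ← mul_smul, ← mul_assoc, ← map_mul, hcoef]
end
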